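/- arXiv:2111.10978 — 2 statements merged into one kernel-verified Lean document; each statement's English description precedes it below -/
import Mathlib

section
/- Let x⁽¹⁾[x⁽⁰⁾](u,θ,α,λ) = σ( Σ_{λ'} ∫_{ℝ²} x⁽⁰⁾(u+u', λ') · 2^{−2α} W_{λ',λ}(2^{−α} R_{−θ} u') du' + b(λ) ). Then for every (η,β,v) ∈ RST, x⁽¹⁾[D⁽⁰⁾_{η,β,v} x⁽⁰⁾] = D⁽¹⁾_{η,β,v} x⁽¹⁾[x⁽⁰⁾], where (D⁽⁰⁾_{η,β,v} x)(u,λ) = x(R_{−η}2^{−β}(u−v), λ) and (D⁽¹⁾_{η,β,v} y)(u,θ,α,λ) = y(R_{−η}2^{−β}(u−v), θ−η, α−β, λ). -/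
open MeasureTheory Real Complex

noncomputable section

instance : Fact (0 < 2 * Real.pi) := ⟨Real.two_pi_pos⟩
instance : MeasureSpace Real.Angle :=
  inferInstanceAs (MeasureSpace (AddCircle (2 * Real.pi)))

/-- Counterclockwise rotation by the angle `θ`, acting on the plane `ℝ² ≅ ℂ`. -/
def rot (θ : Real.Angle) (z : ℂ) : ℂ := (θ.toCircle : ℂ) * z

/-- The underlying set of the roto-scale-translation group `RST = (SO(2) × ℝ) ⋉ ℝ²`. -/
abbrev RST : Type := Real.Angle × ℝ × ℂ

/-- Group multiplication on `RST`: `(η, β, v) · (θ, α, u) = (θ + η, α + β, v + R_η 2^β u)`. -/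
def rstMul (g h : RST) : RST :=
  (h.1 + g.1, h.2.1 + g.2.1, g.2.2 + rot g.1 (((2:ℝ) ^ g.2.1) • h.2.2))
variable {Λ₀ Λ₁ : Type*} [Fintype Λ₀]

/-- Action of `RST` on input images. -/
def D0 (η : Real.Angle) (β : ℝ) (v : ℂ) (x : ℂ → Λ₀ → ℝ) : ℂ → Λ₀ → ℝ :=
  fun u lam => x (rot (-η) (((2:ℝ) ^ (-β)) • (u - v))) lam

/-- Action of `RST` on first-layer features. -/
def D1 (η : Real.Angle) (β : ℝ) (v : ℂ)
    (y : ℂ → Real.Angle → ℝ → Λ₁ → ℝ) : ℂ → Real.Angle → ℝ → Λ₁ → ℝ :=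
  fun u θ α lam => y (rot (-η) (((2:ℝ) ^ (-β)) • (u - v))) (θ - η) (α - β) lam

/-- The first layer of an RST-CNN:
`x⁽¹⁾[x⁽⁰⁾](u,θ,α,λ) = σ( Σ_{λ'} ∫ x⁽⁰⁾(u+u',λ') 2^{-2α} W_{λ',λ}(2^{-α} R_{-θ} u') du' + b(λ) )`. -/
def layer1 (σ : ℝ → ℝ) (W : Λ₀ → Λ₁ → ℂ → ℝ) (b : Λ₁ → ℝ)
    (x : ℂ → Λ₀ → ℝ) : ℂ → Real.Angle → ℝ → Λ₁ → ℝ :=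
  fun u θ α lam => σ ((∑ lam' : Λ₀, ∫ u' : ℂ,
    x (u + u') lam' * ((2:ℝ) ^ (-(2*α)) * W lam' lam (((2:ℝ) ^ (-α)) • rot (-θ) u'))) + b lam)

/-
Identify `ℝ² ≅ ℂ`, so that `R_θ 2^α` is multiplication by `2^α e^{iθ}` and the
filter in the first layer is `W` dilated by a complex number `d`. The substitution `u' = c w`
has Jacobian `‖c‖²`, so correlating the transformed input `x (c⁻¹ (· - v))` with the filter
dilated by `d` equals correlating `x` with the filter dilated by `c⁻¹ d`, evaluated at
`c⁻¹ (u - v)`. For `c = 2^β e^{iη}` and `d = 2^α e^{iθ}`, `c⁻¹ d = 2^{α-β} e^{i(θ-η)}`.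
-/

theorem Complex.integral_comp_mul_left {E : Type*} [NormedAddCommGroup E] [NormedSpace ℝ E]
    (f : ℂ → E) (c : ℂ) : ∫ z, f (c * z) = (‖c‖ ^ 2)⁻¹ • ∫ z, f z := by
  have polar : ∀ z, c * z = ‖c‖ • rotation (Circle.exp (arg c)) z := fun z => by
    rw [rotation_apply, Circle.coe_exp, real_smul, ← mul_assoc, norm_mul_exp_arg_mul_I]
  simp only [polar]
  rw [(rotation (Circle.exp (arg c))).measurePreserving.integral_comp
      (rotation _).toHomeomorph.measurableEmbedding (fun z => f (‖c‖ • z)),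
    Measure.integral_comp_smul_of_nonneg volume f ‖c‖ (hR := norm_nonneg c), finrank_real_complex]

def dilatedCorrelation (x K : ℂ → ℝ) (d u : ℂ) : ℝ :=
  ∫ u', x (u + u') * ((‖d‖ ^ 2)⁻¹ * K (d⁻¹ * u'))

theorem dilatedCorrelation_comp_affine (x K : ℂ → ℝ) {c : ℂ} (hc : c ≠ 0) (d u v : ℂ) :
    dilatedCorrelation (fun z => x (c⁻¹ * (z - v))) K d u =
      dilatedCorrelation x K (c⁻¹ * d) (c⁻¹ * (u - v)) := by
  have substitution := Complex.integral_comp_mul_left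
    (fun u' => x (c⁻¹ * (u + u' - v)) * ((‖d‖ ^ 2)⁻¹ * K (d⁻¹ * u'))) c
  rw [smul_eq_mul, eq_inv_mul_iff_mul_eq₀ (by positivity)] at substitution
  rw [dilatedCorrelation, dilatedCorrelation, ← substitution, ← integral_const_mul]
  congr 1 with w
  have shifted_point : c⁻¹ * (u + c * w - v) = c⁻¹ * (u - v) + w := by field_simp; ring
  have dilated_point : (c⁻¹ * d)⁻¹ * w = d⁻¹ * (c * w) := by rw [mul_inv, inv_inv]; ring
  have jacobian : ‖c‖ ^ 2 * (‖d‖ ^ 2)⁻¹ = (‖c⁻¹ * d‖ ^ 2)⁻¹ := by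
    rw [norm_mul, norm_inv, mul_pow, mul_inv, inv_pow, inv_inv]
  rw [shifted_point, dilated_point, ← jacobian]
  ring

def rotScale (θ : Real.Angle) (α : ℝ) : ℂ := ((2 : ℝ) ^ α : ℝ) * θ.toCircle

theorem rotScale_ne_zero (θ : Real.Angle) (α : ℝ) : rotScale θ α ≠ 0 :=
  mul_ne_zero (ofReal_ne_zero.mpr (by positivity)) (Circle.coe_ne_zero _)

theorem inv_norm_rotScale_sq (θ : Real.Angle) (α : ℝ) :
    (‖rotScale θ α‖ ^ 2)⁻¹ = (2 : ℝ) ^ (-(2 * α)) := by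
  rw [rotScale, norm_mul, Circle.norm_coe, mul_one, norm_real, Real.norm_of_nonneg (by positivity),
    Real.rpow_neg two_pos.le, mul_comm, Real.rpow_mul two_pos.le, Real.rpow_two]

theorem rot_neg_rpow_neg_smul (θ : Real.Angle) (α : ℝ) (z : ℂ) :
    rot (-θ) ((2 : ℝ) ^ (-α) • z) = (rotScale θ α)⁻¹ * z := by
  simp only [rot, rotScale, Real.Angle.toCircle_neg, Circle.coe_inv, Real.rpow_neg two_pos.le,
    real_smul, mul_inv]
  push_cast
  ring

theorem rpow_neg_smul_rot_neg (θ : Real.Angle) (α : ℝ) (z : ℂ) :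
    (2 : ℝ) ^ (-α) • rot (-θ) z = (rotScale θ α)⁻¹ * z := by
  rw [← rot_neg_rpow_neg_smul, rot, rot, real_smul, real_smul, mul_left_comm]

theorem inv_rotScale_mul_rotScale (η θ : Real.Angle) (α β : ℝ) :
    (rotScale η β)⁻¹ * rotScale θ α = rotScale (θ - η) (α - β) := by
  simp only [rotScale, sub_eq_add_neg, Real.Angle.toCircle_add, Real.Angle.toCircle_neg,
    Circle.coe_mul, Circle.coe_inv, Real.rpow_add two_pos, Real.rpow_neg two_pos.le]
  push_cast
  field_simp

theorem layer1_apply (σ : ℝ → ℝ) (W : Λ₀ → Λ₁ → ℂ → ℝ) (b : Λ₁ → ℝ) (x : ℂ → Λ₀ → ℝ)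
    (u : ℂ) (θ : Real.Angle) (α : ℝ) (lam : Λ₁) :
    layer1 σ W b x u θ α lam =
      σ ((∑ lam' : Λ₀, dilatedCorrelation (x · lam') (W lam' lam) (rotScale θ α) u) + b lam) := by
  simp only [layer1, dilatedCorrelation, rpow_neg_smul_rot_neg, inv_norm_rotScale_sq]

/-- the first layer is `RST`-equivariant:
`x⁽¹⁾[D⁽⁰⁾_{η,β,v} x⁽⁰⁾] = D⁽¹⁾_{η,β,v} x⁽¹⁾[x⁽⁰⁾]` for every `(η,β,v) ∈ RST`. -/
theorem layer1_equivariant (σ : ℝ → ℝ) (W : Λ₀ → Λ₁ → ℂ → ℝ) (b : Λ₁ → ℝ)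
    (η : Real.Angle) (β : ℝ) (v : ℂ) (x : ℂ → Λ₀ → ℝ) :
    layer1 σ W b (D0 η β v x) = D1 η β v (layer1 σ W b x) := by
  funext u θ α lam
  simp only [layer1_apply, D0, D1, rot_neg_rpow_neg_smul, ← inv_rotScale_mul_rotScale]
  congr 2
  refine Finset.sum_congr rfl fun lam' _ => ?_
  exact dilatedCorrelation_comp_affine (x · lam') (W lam' lam) (rotScale_ne_zero η β) _ u v
end
end

section
/- Let x⁽ˡ⁾[x](u,θ,α,λ) = σ( Σ_{λ'} ∫_{ℝ²}∫_{S¹}∫_ℝ x(u+u', θ+θ', α+α', λ') · 2^{−2α} W_{λ',λ}(2^{−α} R_{−θ} u', θ', α') dα' dθ' du' + b(λ) ). Then for every (η,β,v) ∈ RST, x⁽ˡ⁾[D_{η,β,v} x] = D_{η,β,v} x⁽ˡ⁾[x], where (D_{η,β,v} y)(u,θ,α,λ) = y(R_{−η}2^{−β}(u−v), θ−η, α−β, λ). -/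
open MeasureTheory Real Complex

noncomputable section

variable {Λ' Λ : Type*} [Fintype Λ']

/-- Action of `RST` on hidden-layer features. -/
def Dl {Γ : Type*} (η : Real.Angle) (β : ℝ) (v : ℂ)
    (y : ℂ → Real.Angle → ℝ → Γ → ℝ) : ℂ → Real.Angle → ℝ → Γ → ℝ :=
  fun u θ α lam => y (rot (-η) (((2:ℝ) ^ (-β)) • (u - v))) (θ - η) (α - β) lam

/-- A hidden layer of an RST-CNN, given by the joint group convolution
`x⁽ˡ⁾[x](u,θ,α,λ) = σ( Σ_{λ'} ∫_{ℝ²} (1/2π) ∫_{S¹} ∫_ℝ x(u+u', θ+θ', α+α', λ')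
    2^{-2α} W_{λ',λ}(2^{-α} R_{-θ} u', θ', α') dα' dθ' du' + b(λ) )`. -/
def layerL (σ : ℝ → ℝ) (W : Λ' → Λ → ℂ → Real.Angle → ℝ → ℝ) (b : Λ → ℝ)
    (x : ℂ → Real.Angle → ℝ → Λ' → ℝ) : ℂ → Real.Angle → ℝ → Λ → ℝ :=
  fun u θ α lam => σ ((∑ lam' : Λ', ∫ u' : ℂ, (2 * Real.pi)⁻¹ *
    ∫ θ' : Real.Angle, ∫ α' : ℝ,
      x (u + u') (θ + θ') (α + α') lam' *
        ((2:ℝ) ^ (-(2*α)) * W lam' lam (((2:ℝ) ^ (-α)) • rot (-θ) u') θ' α')) + b lam)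

theorem rot_rot (a b : Real.Angle) (z : ℂ) : rot a (rot b z) = rot (a + b) z := by
  simp [rot, Real.Angle.toCircle_add, mul_assoc]

theorem rot_smul (a : Real.Angle) (r : ℝ) (z : ℂ) : rot a (r • z) = r • rot a z := by
  simp only [rot, Complex.real_smul]
  ring

theorem rot_add (a : Real.Angle) (y z : ℂ) : rot a (y + z) = rot a y + rot a z := by
  simp [rot, mul_add]

theorem integral_comp_rot_smul {E : Type*} [NormedAddCommGroup E] [NormedSpace ℝ E]
    (f : ℂ → E) (a : Real.Angle) {c : ℝ} (hc : c ≠ 0) :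
    ∫ z : ℂ, f (rot a (c • z)) = (c ^ 2)⁻¹ • ∫ z : ℂ, f z := by
  rw [Measure.integral_comp_smul volume (fun z => f (rot a z)), Complex.finrank_real_complex,
    abs_of_pos (by positivity)]
  exact congrArg _ (integral_comp (rotation a.toCircle) f)

def rstCorr (y w : ℂ → Real.Angle → ℝ → ℝ) (u : ℂ) (θ : Real.Angle) (α : ℝ) : ℝ :=
  ∫ u' : ℂ, (2 * Real.pi)⁻¹ * ∫ θ' : Real.Angle, ∫ α' : ℝ,
    y (u + u') (θ + θ') (α + α') * ((2:ℝ) ^ (-(2*α)) * w (((2:ℝ) ^ (-α)) • rot (-θ) u') θ' α')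

theorem layerL_apply (σ : ℝ → ℝ) (W : Λ' → Λ → ℂ → Real.Angle → ℝ → ℝ) (b : Λ → ℝ)
    (x : ℂ → Real.Angle → ℝ → Λ' → ℝ) (u : ℂ) (θ : Real.Angle) (α : ℝ) (lam : Λ) :
    layerL σ W b x u θ α lam =
      σ ((∑ lam' : Λ', rstCorr (fun u θ α => x u θ α lam') (W lam' lam) u θ α) + b lam) :=
  rfl

theorem rot_smul_sub_add (a : Real.Angle) (c : ℝ) (u v u' : ℂ) :
    rot a (c • (u + u' - v)) = rot a (c • (u - v)) + rot a (c • u') := by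
  rw [← rot_add, ← smul_add, add_sub_right_comm]

theorem two_rpow_smul_rot_rot_smul (η θ : Real.Angle) (α β : ℝ) (u' : ℂ) :
    (2:ℝ) ^ (-(α - β)) • rot (-(θ - η)) (rot (-η) ((2:ℝ) ^ (-β) • u')) =
      (2:ℝ) ^ (-α) • rot (-θ) u' := by
  rw [rot_rot, show -(θ - η) + -η = -θ by abel, rot_smul, smul_smul,
    ← Real.rpow_add two_pos, show -(α - β) + -β = -α by ring]

theorem two_rpow_neg_two_mul (α β : ℝ) :
    (2:ℝ) ^ (-(2*α)) = ((2:ℝ) ^ (-β)) ^ 2 * (2:ℝ) ^ (-(2*(α - β))) := by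
  rw [sq, ← Real.rpow_add two_pos, ← Real.rpow_add two_pos]
  ring_nf

/-- Substitute `u' ↦ R_{-η} 2^{-β} u'`: its Jacobian `2^{-2β}` is absorbed by the
normalisation `2^{-2α}` of the filter. -/
theorem rstCorr_comp (y w : ℂ → Real.Angle → ℝ → ℝ) (η : Real.Angle) (β : ℝ) (v u : ℂ)
    (θ : Real.Angle) (α : ℝ) :
    rstCorr (fun u θ α => y (rot (-η) ((2:ℝ) ^ (-β) • (u - v))) (θ - η) (α - β)) w u θ α =
      rstCorr y w (rot (-η) ((2:ℝ) ^ (-β) • (u - v))) (θ - η) (α - β) := by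
  set c : ℝ := (2:ℝ) ^ (-β)
  set u₀ := rot (-η) (c • (u - v))
  set G : ℂ → ℝ := fun z => (2 * Real.pi)⁻¹ * ∫ θ' : Real.Angle, ∫ α' : ℝ,
    y (u₀ + z) (θ - η + θ') (α - β + α') *
      ((2:ℝ) ^ (-(2*(α - β))) * w ((2:ℝ) ^ (-(α - β)) • rot (-(θ - η)) z) θ' α')
  have hc : c ≠ 0 := (Real.rpow_pos_of_pos two_pos _).ne'
  have integrand_eq : ∀ u', (2 * Real.pi)⁻¹ * ∫ θ' : Real.Angle, ∫ α' : ℝ,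
      y (rot (-η) (c • (u + u' - v))) (θ + θ' - η) (α + α' - β) *
        ((2:ℝ) ^ (-(2*α)) * w ((2:ℝ) ^ (-α) • rot (-θ) u') θ' α') =
      c ^ 2 * G (rot (-η) (c • u')) := by
    intro u'
    rw [mul_left_comm]
    congr 1
    rw [← integral_const_mul]
    refine integral_congr_ae (.of_forall fun θ' => ?_)
    dsimp only
    rw [← integral_const_mul]
    refine integral_congr_ae (.of_forall fun α' => ?_)
    dsimp only
    rw [rot_smul_sub_add, two_rpow_smul_rot_rot_smul, two_rpow_neg_two_mul α β,
      show θ + θ' - η = θ - η + θ' by abel, show α + α' - β = α - β + α' by ring]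
    ring
  calc _ = ∫ u' : ℂ, c ^ 2 * G (rot (-η) (c • u')) := integral_congr_ae (.of_forall integrand_eq)
    _ = ∫ z : ℂ, G z := by
      rw [integral_const_mul, ← smul_eq_mul (c ^ 2), integral_comp_rot_smul G _ hc, smul_smul,
        mul_inv_cancel₀ (pow_ne_zero 2 hc), one_smul]

/-- every hidden layer is `RST`-equivariant:
`x⁽ˡ⁾[D_{η,β,v} x] = D_{η,β,v} x⁽ˡ⁾[x]` for every `(η,β,v) ∈ RST`. -/
theorem layerL_equivariant (σ : ℝ → ℝ) (W : Λ' → Λ → ℂ → Real.Angle → ℝ → ℝ)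
    (b : Λ → ℝ) (η : Real.Angle) (β : ℝ) (v : ℂ)
    (x : ℂ → Real.Angle → ℝ → Λ' → ℝ) :
    layerL σ W b (Dl η β v x) = Dl η β v (layerL σ W b x) := by
  funext u θ α lam
  simp only [layerL_apply, Dl]
  congr 2
  exact Finset.sum_congr rfl fun lam' _ =>
    rstCorr_comp (fun u θ α => x u θ α lam') (W lam' lam) η β v u θ α
end
end
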